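/- Let γ ∈ SL(2,ℝ) with bottom row (c,d), let s ∈ ℂ with Re s < 1/2, and let f : ℝ → ℂ be bounded and measurable. Then for every x ∈ ℝ with cx + d ≠ 0, the integrals defining (B(s)f)(γ(x)) and (B(s)g)(x) converge absolutely, where g(x') := |γ'(x')|_S^{1−s} f(γ(x')) (defined for almost every x', namely when cx'+d ≠ 0), and one has the equivariance identity |γ'(x)|_S^s · (B(s)f)(γ(x)) = (B(s)g)(x). Here t^w := exp(w·log t) for t > 0, w ∈ ℂ. -/

import Mathlib

open Complex MeasureTheory Metric Set
open scoped Real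

noncomputable section


abbrev SL2R := Matrix.SpecialLinearGroup (Fin 2) ℝ

/-- Entries of a matrix in `SL(2,ℝ)`, as complex numbers. -/
def mA (g : SL2R) : ℂ := ((g.1 0 0 : ℝ) : ℂ)
def mB (g : SL2R) : ℂ := ((g.1 0 1 : ℝ) : ℂ)
def mC (g : SL2R) : ℂ := ((g.1 1 0 : ℝ) : ℂ)
def mD (g : SL2R) : ℂ := ((g.1 1 1 : ℝ) : ℂ)

/-- The Möbius action of `SL(2,ℝ)` on the Riemann sphere `ℂ ∪ {∞}`. -/
def moebius (g : SL2R) : OnePoint ℂ → OnePoint ℂ := fun z =>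
  match z with
  | OnePoint.infty => if mC g = 0 then OnePoint.infty else ((mA g / mC g : ℂ) : OnePoint ℂ)
  | (w : ℂ) => if mC g * w + mD g = 0 then OnePoint.infty
      else (((mA g * w + mB g) / (mC g * w + mD g) : ℂ) : OnePoint ℂ)

/-- The Möbius action on `ℂ`, with junk value at the pole. -/
def moebiusC (g : SL2R) (z : ℂ) : ℂ := (mA g * z + mB g) / (mC g * z + mD g)

/-- The Möbius action on `ℝ`, with junk value at the pole. -/
def moebiusR (g : SL2R) (x : ℝ) : ℝ :=
  (g.1 0 0 * x + g.1 0 1) / (g.1 1 0 * x + g.1 1 1)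

/-- The complex derivative `γ'(z) = (cz+d)⁻²` of a Möbius transformation (`det = 1`). -/
def dMob (g : SL2R) (z : ℂ) : ℂ := ((mC g * z + mD g)⁻¹) ^ 2

/-- The involution `a ↦ ā` on the alphabet `{1, …, 2r}` (as `Fin (2*r)`). -/
def bar {r : ℕ} (a : Fin (2 * r)) : Fin (2 * r) :=
  if h : (a : ℕ) < r then ⟨(a : ℕ) + r, by omega⟩
  else ⟨(a : ℕ) - r, by have := a.isLt; omega⟩

/-- Schottky data: `2r` pairwise disjoint closed disks centered on the real axis and
`2r` elements of `SL(2,ℝ)` with `γ_a((ℂ∪{∞}) \ interior D_{ā}) = D_a`, `γ_ā = γ_a⁻¹`. -/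
structure Schottky (r : ℕ) where
  hr : 1 ≤ r
  center : Fin (2 * r) → ℝ
  radius : Fin (2 * r) → ℝ
  radius_pos : ∀ a, 0 < radius a
  disj : Pairwise fun a b =>
    Disjoint (closedBall ((center a : ℝ) : ℂ) (radius a)) (closedBall ((center b : ℝ) : ℂ) (radius b))
  γ : Fin (2 * r) → SL2R
  γ_bar : ∀ a, γ (bar a) = (γ a)⁻¹
  γ_maps : ∀ a, moebius (γ a) ''
      (univ \ ((fun z : ℂ => (z : OnePoint ℂ)) '' interior (closedBall ((center (bar a) : ℝ) : ℂ) (radius (bar a)))))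
    = (fun z : ℂ => (z : OnePoint ℂ)) '' closedBall ((center a : ℝ) : ℂ) (radius a)

/-- Words: finite sequences of letters with `a_{j+1} ≠ ā_j`. -/
def IsWord {r : ℕ} (w : List (Fin (2 * r))) : Prop := w.Chain' fun x y => y ≠ bar x

/-- The word `ā := ā_n ⋯ ā_1`. -/
def barWord {r : ℕ} (w : List (Fin (2 * r))) : List (Fin (2 * r)) := (w.map bar).reverse

namespace Schottky

variable {r : ℕ} (S : Schottky r)

/-- The disk `D_a` for a letter `a`. -/
def disk (a : Fin (2 * r)) : Set ℂ := closedBall ((S.center a : ℝ) : ℂ) (S.radius a)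

/-- `γ_w := γ_{a_1} ⋯ γ_{a_n}`. -/
def g (w : List (Fin (2 * r))) : SL2R := (w.map S.γ).prod

/-- The disk `D_w := γ_{w'}(D_{a_n})` of a nonempty word, as a subset of the Riemann sphere. -/
def sdisk : List (Fin (2 * r)) → Set (OnePoint ℂ)
  | [] => ∅
  | a :: w => moebius (S.g ((a :: w).dropLast)) ''
      ((fun z : ℂ => (z : OnePoint ℂ)) '' S.disk ((a :: w).getLast (List.cons_ne_nil a w)))

/-- The disk `D_w` as a subset of `ℂ`. -/
def wdisk (w : List (Fin (2 * r))) : Set ℂ := {z : ℂ | (z : OnePoint ℂ) ∈ S.sdisk w}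

/-- The interval `I_w = D_w ∩ ℝ`, as a subset of `ℝ`. -/
def wint (w : List (Fin (2 * r))) : Set ℝ := {x : ℝ | ((x : ℝ) : ℂ) ∈ S.wdisk w}

/-- The length `|I_w|` of the interval `I_w`. -/
def wlen (w : List (Fin (2 * r))) : ℝ := Metric.diam (S.wint w)

/-- `D = ⋃_{a ∈ A} D_a`. -/
def D : Set ℂ := ⋃ a, S.disk a

/-- `I = D ∩ ℝ`, as a subset of `ℝ`. -/
def Ire : Set ℝ := {x : ℝ | ((x : ℝ) : ℂ) ∈ S.D}

/-- `D₂ = ⋃_{|w| = 2} D_w`. -/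
def D₂ : Set ℂ := ⋃ (a : Fin (2 * r)), ⋃ (b : Fin (2 * r)), ⋃ (_ : b ≠ bar a), S.wdisk [a, b]

/-- `I'_a` for a letter `a`: the convex hull of `⋃_{b ≠ ā} I_{ab}`. -/
def iprimeLetter (a : Fin (2 * r)) : Set ℝ :=
  convexHull ℝ (⋃ (b : Fin (2 * r)), ⋃ (_ : b ≠ bar a), S.wint [a, b])

/-- `I'_w := γ_{w'}(I'_{a_n})` for a nonempty word `w`. -/
def iprime : List (Fin (2 * r)) → Set ℝ
  | [] => ∅
  | a :: w => moebiusR (S.g ((a :: w).dropLast)) ''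
      S.iprimeLetter ((a :: w).getLast (List.cons_ne_nil a w))

/-- The partition `Z(τ)`. -/
def Ztau (τ : ℝ) : Set (List (Fin (2 * r))) :=
  {w | w ≠ [] ∧ IsWord w ∧ S.wlen w ≤ τ ∧ (w.dropLast = [] ∨ τ < S.wlen w.dropLast)}

/-- The limit set `Λ_Γ ⊂ ℝ`. -/
def limitSet : Set ℝ :=
  {x : ℝ | ∀ n : ℕ, 1 ≤ n → ∃ w : List (Fin (2 * r)), IsWord w ∧ w.length = n ∧ x ∈ S.wint w}

/-- The τ-neighbourhood `Λ_Γ(τ) ⊂ ℝ` of the limit set. -/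
def limitSetNbhd (τ : ℝ) : Set ℝ := {x : ℝ | ∃ y ∈ S.limitSet, |x - y| ≤ τ}

end Schottky

/-- `ℓ` is a holomorphic branch on `U` of the logarithm of the derivative of the Möbius
transformation of `g`, real on `U ∩ ℝ`. -/
structure IsLogBranch (g : SL2R) (U : Set ℂ) (ℓ : ℂ → ℂ) : Prop where
  holo : DifferentiableOn ℂ ℓ U
  exp_eq : ∀ z ∈ U, Complex.exp (ℓ z) = dMob g z
  real_on : ∀ x : ℝ, ((x : ℝ) : ℂ) ∈ U → (ℓ ((x : ℝ) : ℂ)).im = 0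

/-- A family of branches `ℓ a b` of `log γ_a'` on `D_b`, for all `a ≠ b̄`. -/
def IsBranchFamily {r : ℕ} (S : Schottky r) (ℓ : Fin (2 * r) → Fin (2 * r) → ℂ → ℂ) : Prop :=
  ∀ a b : Fin (2 * r), a ≠ bar b → IsLogBranch (S.γ a) (S.disk b) (ℓ a b)

/-- The fixed-point equation `L_s u = u` on the interior of `D`, written pointwise. -/
def TransferFixed {r : ℕ} (S : Schottky r) (s : ℂ)
    (ℓ : Fin (2 * r) → Fin (2 * r) → ℂ → ℂ) (u : ℂ → ℂ) : Prop :=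
  ∀ b : Fin (2 * r), ∀ z ∈ interior (S.disk b),
    u z = ∑ a : Fin (2 * r), if a ≠ bar b then
      Complex.exp (s * ℓ a b z) * u (moebiusC (S.γ a) z) else 0

/-- The transfer operator `L_s`, as an operator on functions. -/
def transferOp {r : ℕ} (S : Schottky r) (s : ℂ)
    (ℓ : Fin (2 * r) → Fin (2 * r) → ℂ → ℂ) (u : ℂ → ℂ) : ℂ → ℂ := fun z =>
  ∑ b : Fin (2 * r), (S.disk b).indicator
    (fun w => ∑ a : Fin (2 * r), if a ≠ bar b then
      Complex.exp (s * ℓ a b w) * u (moebiusC (S.γ a) w) else 0) z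

/-- A partition: a finite set of nonempty words such that every long enough word
has exactly one prefix in it. -/
def IsPartition {r : ℕ} (S : Schottky r) (Z : Finset (List (Fin (2 * r)))) : Prop :=
  (∀ w ∈ Z, w ≠ [] ∧ IsWord w) ∧
  ∃ N : ℕ, ∀ w : List (Fin (2 * r)), IsWord w → N ≤ w.length →
    ∃! p : List (Fin (2 * r)), p ∈ Z ∧ p <+: w



/-- `⟨x⟩ = √(1+x²)`. -/
def jap (x : ℝ) : ℝ := Real.sqrt (1 + x ^ 2)

/-- `|x−y|_S = 2|x−y|/(⟨x⟩⟨y⟩)`: the chordal (circle) distance on `ℝ ≃ S¹ ∖ {pt}`. -/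
def dS (x y : ℝ) : ℝ := 2 * |x - y| / (jap x * jap y)

/-- The measure `dP(x) = 2⟨x⟩⁻² dx` on `ℝ`. -/
def muP : Measure ℝ := (volume : Measure ℝ).withDensity fun x => ENNReal.ofReal (2 / (1 + x ^ 2))

/-- `t^w := exp(w log t)` for real `t` and complex `w` (junk value `exp 0 = 1` at `t = 0`). -/
def cpowR (t : ℝ) (w : ℂ) : ℂ := Complex.exp (w * Real.log t)

/-- The operator `B(s)`: `(B(s)f)(x) = |Im s/(2π)|^{1/2} ∫ |x−x'|_S^{−2s} f(x') dP(x')`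
(with the junk value `0` when the integral does not converge absolutely). -/
def Bop (s : ℂ) (f : ℝ → ℂ) (x : ℝ) : ℂ :=
  ((Real.sqrt (|s.im| / (2 * π)) : ℝ) : ℂ) * ∫ y, cpowR (dS x y) (-2 * s) * f y ∂muP

/-- `|γ'(x)|` for the real Möbius transformation of `g` (junk at the pole). -/
def dMobR (g : Matrix.SpecialLinearGroup (Fin 2) ℝ) (x : ℝ) : ℝ := ((g.1 1 0 * x + g.1 1 1)⁻¹) ^ 2


/-- The circle derivative `|γ'(x)|_S := ⟨x⟩²⟨γ(x)⟩⁻²γ'(x)` of a real Möbius transformation. -/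
def dMobSR (g : SL2R) (x : ℝ) : ℝ := jap x ^ 2 / jap (moebiusR g x) ^ 2 * dMobR g x

/-!
A Möbius map `γ` rescales the chordal distance by
`|γx − γy|_S = (|γ'(x)|_S |γ'(y)|_S)^{1/2} |x − y|_S`, and it rescales the density of `dP` by
`|γ'(y)| · 2⟨γy⟩⁻² = |γ'(y)|_S · 2⟨y⟩⁻²`. Substituting `y ↦ γy` in the integral defining
`(B(s)f)(γx)` therefore produces `|γ'(x)|_S^{-s} (B(s)g)(x)`. Both integrals converge absolutely:
the kernel is comparable to `|x − y|^{-2 Re s} ⟨y⟩^{2 Re s - 2} dy`, integrable for `Re s < 1/2`,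
and `|γ'|_S` is bounded by the squared Frobenius norm of `γ`, so `g` is bounded.
-/

lemma jap_pos (x : ℝ) : 0 < jap x := Real.sqrt_pos.2 (by positivity)

lemma jap_sq (x : ℝ) : jap x ^ 2 = 1 + x ^ 2 := Real.sq_sqrt (by positivity)

lemma continuous_jap : Continuous jap := by unfold jap; fun_prop

lemma dS_pos {x y : ℝ} (h : x ≠ y) : 0 < dS x y :=
  div_pos (by simp [sub_ne_zero.2 h]) (mul_pos (jap_pos x) (jap_pos y))

lemma dS_le_two (x y : ℝ) : dS x y ≤ 2 := by
  have h : |x - y| ≤ jap x * jap y := by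
    rw [jap, jap, ← Real.sqrt_mul (by positivity)]
    exact Real.abs_le_sqrt (by nlinarith [sq_nonneg (1 + x * y)])
  rw [dS, div_le_iff₀ (mul_pos (jap_pos x) (jap_pos y))]
  linarith

lemma continuous_dS (x : ℝ) : Continuous (dS x) :=
  (by fun_prop : Continuous fun y => 2 * |x - y|).div (continuous_const.mul continuous_jap)
    fun y => (mul_pos (jap_pos x) (jap_pos y)).ne'

lemma norm_cpowR_of_pos {t : ℝ} (ht : 0 < t) (w : ℂ) : ‖cpowR t w‖ = t ^ w.re := by
  rw [cpowR, Complex.norm_exp, Real.rpow_def_of_pos ht, mul_comm]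
  simp

lemma cpowR_add (t : ℝ) (u v : ℂ) : cpowR t (u + v) = cpowR t u * cpowR t v := by
  rw [cpowR, cpowR, cpowR, add_mul, Complex.exp_add]

lemma cpowR_zero (t : ℝ) : cpowR t 0 = 1 := by simp [cpowR]

lemma cpowR_one {t : ℝ} (ht : 0 < t) : cpowR t 1 = t := by
  rw [cpowR, one_mul, ← Complex.ofReal_exp, Real.exp_log ht]

lemma cpowR_mul {t u : ℝ} (ht : 0 < t) (hu : 0 < u) (w : ℂ) :
    cpowR (t * u) w = cpowR t w * cpowR u w := by
  rw [cpowR, cpowR, cpowR, Real.log_mul ht.ne' hu.ne', ← Complex.exp_add]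
  push_cast
  ring_nf

lemma cpowR_sqrt {t : ℝ} (ht : 0 ≤ t) (w : ℂ) : cpowR (√t) (2 * w) = cpowR t w := by
  rw [cpowR, cpowR, Real.log_sqrt ht]
  push_cast
  ring_nf

lemma Measurable.cpowR {h : ℝ → ℝ} (hh : Measurable h) (w : ℂ) :
    Measurable fun y => cpowR (h y) w := by
  unfold _root_.cpowR
  fun_prop

section muP

variable {E : Type*} [NormedAddCommGroup E] [NormedSpace ℝ E]

lemma integral_muP (h : ℝ → E) : ∫ y, h y ∂muP = ∫ y, (2 / (1 + y ^ 2)) • h y := by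
  rw [muP, integral_withDensity_eq_integral_toReal_smul (by fun_prop)
    (ae_of_all _ fun _ => ENNReal.ofReal_lt_top)]
  simp only [ENNReal.toReal_ofReal (by positivity : (0 : ℝ) ≤ 2 / (1 + _ ^ 2))]

lemma integrable_muP_iff {h : ℝ → E} :
    Integrable h muP ↔ Integrable (fun y => (2 / (1 + y ^ 2)) • h y) := by
  rw [muP, integrable_withDensity_iff_integrable_smul' (by fun_prop)
    (ae_of_all _ fun _ => ENNReal.ofReal_lt_top)]
  simp only [ENNReal.toReal_ofReal (by positivity : (0 : ℝ) ≤ 2 / (1 + _ ^ 2))]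

end muP

instance isFiniteMeasure_muP : IsFiniteMeasure muP :=
  isFiniteMeasure_withDensity_ofReal
    (by simpa [div_eq_mul_inv] using (integrable_inv_one_add_sq.const_mul 2).hasFiniteIntegral)

lemma integrable_abs_sub_rpow_mul_one_add_sq_rpow {r p : ℝ} (hr : -1 < r) (hr0 : r ≤ 0)
    (hp : p < -1 / 2) (X : ℝ) :
    Integrable fun y : ℝ => |X - y| ^ r * (1 + y ^ 2) ^ p := by
  have hnear : IntegrableOn (fun u : ℝ => |u| ^ r) (ball 0 1) :=
    integrableOn_ball_of_norm_le_rpow (C := 1) (α := -r) (by simp) (by simp; linarith)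
      (ae_of_all _ fun u => by simp [abs_of_nonneg (Real.rpow_nonneg (abs_nonneg u) r)])
      (continuous_abs.measurable.pow_const r).aestronglyMeasurable
  have htail : Integrable fun u : ℝ => (1 + (X - u) ^ 2) ^ p := by
    have := (integrable_rpow_neg_one_add_norm_sq (E := ℝ) (μ := volume) (r := -2 * p)
      (by simp; linarith)).comp_sub_left X
    simpa using this
  have hbound : ∀ u : ℝ, |u| ^ r * (1 + (X - u) ^ 2) ^ p
      ≤ (ball 0 1).indicator (fun u : ℝ => |u| ^ r) u + (1 + (X - u) ^ 2) ^ p := by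
    intro u
    have hpow : (1 + (X - u) ^ 2) ^ p ≤ 1 :=
      Real.rpow_le_one_of_one_le_of_nonpos (by nlinarith) (by linarith)
    have hpow0 : 0 ≤ (1 + (X - u) ^ 2) ^ p := by positivity
    by_cases hu : u ∈ ball (0 : ℝ) 1
    · rw [indicator_of_mem hu]
      nlinarith [Real.rpow_nonneg (abs_nonneg u) r]
    · rw [indicator_of_notMem hu, zero_add]
      have : |u| ^ r ≤ 1 := Real.rpow_le_one_of_one_le_of_nonpos (by simpa using hu) hr0
      nlinarith
  have hu : Integrable fun u : ℝ => |u| ^ r * (1 + (X - u) ^ 2) ^ p :=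
    ((hnear.integrable_indicator measurableSet_ball).add htail).mono' (by fun_prop)
      (ae_of_all _ fun u => by
        rw [Real.norm_of_nonneg (by positivity)]
        exact hbound u)
  simpa using hu.comp_sub_left X

lemma density_mul_dS_rpow {X y : ℝ} (h : X ≠ y) (ρ : ℝ) :
    2 / (1 + y ^ 2) * dS X y ^ ρ
      = 2 ^ (1 + ρ) * jap X ^ (-ρ) * (|X - y| ^ ρ * (1 + y ^ 2) ^ (-ρ / 2 - 1)) := by
  have hA : 0 < |X - y| := abs_pos.2 (sub_ne_zero.2 h)
  have hJ := jap_pos y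
  have hK := jap_pos X
  rw [dS, ← jap_sq, Real.div_rpow (by positivity) (by positivity), Real.mul_rpow two_pos.le hA.le,
    Real.mul_rpow hK.le hJ.le, ← Real.rpow_natCast, ← Real.rpow_mul hJ.le, Real.rpow_add two_pos,
    Real.rpow_neg hK.le, Real.rpow_one]
  push_cast
  rw [show (2 : ℝ) * (-ρ / 2 - 1) = -ρ + -2 by ring, Real.rpow_add hJ, Real.rpow_neg hJ.le,
    Real.rpow_neg hJ.le, Real.rpow_two]
  field_simp

lemma integrable_cpowR_dS {s : ℂ} (hs : s.re < 1 / 2) (X : ℝ) :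
    Integrable (fun y => cpowR (dS X y) (-2 * s)) muP := by
  have hmeas : Measurable fun y => cpowR (dS X y) (-2 * s) :=
    (continuous_dS X).measurable.cpowR _
  set ρ := -2 * s.re
  have hnorm : ∀ᵐ y ∂volume, ‖cpowR (dS X y) (-2 * s)‖ = dS X y ^ ρ := by
    filter_upwards [Measure.ae_ne volume X] with y hy
    rw [norm_cpowR_of_pos (dS_pos hy.symm)]
    simp [ρ]
  rcases le_or_gt s.re 0 with hσ | hσ
  · refine Integrable.of_bound hmeas.aestronglyMeasurable (2 ^ ρ) ?_
    filter_upwards [(withDensity_absolutelyContinuous _ _).ae_le hnorm,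
      (withDensity_absolutelyContinuous _ _).ae_le (Measure.ae_ne volume X)] with y hy hyX
    rw [hy]
    exact Real.rpow_le_rpow (dS_pos hyX.symm).le (dS_le_two X y) (by linarith)
  · rw [integrable_muP_iff]
    refine ((integrable_abs_sub_rpow_mul_one_add_sq_rpow (r := ρ) (p := -ρ / 2 - 1)
      (by linarith) (by linarith) (by linarith) X).const_mul
      (2 ^ (1 + ρ) * jap X ^ (-ρ))).mono' (by fun_prop) ?_
    filter_upwards [hnorm, Measure.ae_ne volume X] with y hy hyX
    rw [norm_smul, hy, Real.norm_of_nonneg (by positivity), density_mul_dS_rpow hyX.symm]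

lemma volume_setOf_mul_add_eq_zero {p q : ℝ} (h : p ≠ 0 ∨ q ≠ 0) :
    volume {y : ℝ | p * y + q = 0} = 0 := by
  rcases eq_or_ne p 0 with rfl | hp
  · simp [h.resolve_left (not_not.2 rfl)]
  · refine Set.Subsingleton.measure_zero (fun y hy z hz => ?_) volume
    exact mul_left_cancel₀ hp (add_right_cancel (hy.trans hz.symm : p * y + q = p * z + q))

section Moebius

variable (g : SL2R)

lemma SL2R.det_eq : g.1 0 0 * g.1 1 1 - g.1 0 1 * g.1 1 0 = 1 := by
  have h := g.2
  rwa [Matrix.det_fin_two] at h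

lemma ae_denom_ne_zero : ∀ᵐ y : ℝ, g.1 1 0 * y + g.1 1 1 ≠ 0 := by
  refine measure_mono_null (fun y hy => ?_) (volume_setOf_mul_add_eq_zero (p := g.1 1 0)
    (q := g.1 1 1) (by by_contra! h; simpa [h.1, h.2] using SL2R.det_eq g))
  simpa using hy

lemma measurableSet_denom_ne_zero : MeasurableSet {y : ℝ | g.1 1 0 * y + g.1 1 1 ≠ 0} :=
  (by fun_prop : Measurable fun y : ℝ => g.1 1 0 * y + g.1 1 1) (measurableSet_singleton 0).compl

lemma moebiusR_sub {x y : ℝ} (hx : g.1 1 0 * x + g.1 1 1 ≠ 0) (hy : g.1 1 0 * y + g.1 1 1 ≠ 0) :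
    moebiusR g x - moebiusR g y
      = (x - y) / ((g.1 1 0 * x + g.1 1 1) * (g.1 1 0 * y + g.1 1 1)) := by
  rw [moebiusR, moebiusR, div_sub_div _ _ hx hy]
  congr 1
  linear_combination (x - y) * SL2R.det_eq g

lemma injOn_moebiusR : InjOn (moebiusR g) {y : ℝ | g.1 1 0 * y + g.1 1 1 ≠ 0} := by
  intro x hx y hy hxy
  have := moebiusR_sub g hx hy
  rw [hxy, sub_self, eq_comm, div_eq_zero_iff, sub_eq_zero] at this
  exact this.resolve_right (mul_ne_zero hx hy)

lemma hasDerivAt_moebiusR {y : ℝ} (hy : g.1 1 0 * y + g.1 1 1 ≠ 0) :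
    HasDerivAt (moebiusR g) (dMobR g y) y := by
  have hnum : HasDerivAt (fun y : ℝ => g.1 0 0 * y + g.1 0 1) (g.1 0 0) y := by
    simpa using ((hasDerivAt_id y).const_mul (g.1 0 0)).add_const (g.1 0 1)
  have hden : HasDerivAt (fun y : ℝ => g.1 1 0 * y + g.1 1 1) (g.1 1 0) y := by
    simpa using ((hasDerivAt_id y).const_mul (g.1 1 0)).add_const (g.1 1 1)
  refine (hnum.div hden hy).congr_deriv ?_
  rw [dMobR, inv_pow, ← one_div]
  congr 1
  linear_combination SL2R.det_eq g

lemma ae_mem_image_moebiusR :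
    ∀ᵐ z : ℝ, z ∈ moebiusR g '' {y : ℝ | g.1 1 0 * y + g.1 1 1 ≠ 0} := by
  have hdet := SL2R.det_eq g
  have hnull := volume_setOf_mul_add_eq_zero (p := -g.1 1 0) (q := g.1 0 0)
    (by by_contra! h; simp [neg_eq_zero.1 h.1, h.2] at hdet)
  refine measure_mono_null (fun z hz => not_not.1 fun hz' => ?_) hnull
  set w := -g.1 1 0 * z + g.1 0 0
  have hw : w ≠ 0 := hz'
  -- the preimage is `g⁻¹ z = (d z - b) / (-c z + a)`
  have hden : g.1 1 0 * ((g.1 1 1 * z - g.1 0 1) / w) + g.1 1 1 = 1 / w := by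
    field_simp
    linear_combination hdet
  have hnum : g.1 0 0 * ((g.1 1 1 * z - g.1 0 1) / w) + g.1 0 1 = z / w := by
    field_simp
    linear_combination z * hdet
  refine hz ⟨(g.1 1 1 * z - g.1 0 1) / w, ?_, ?_⟩
  · simpa [hden] using hw
  · rw [moebiusR, hden, hnum, div_div_div_cancel_right₀ hw, div_one]

lemma integral_comp_moebiusR {E : Type*} [NormedAddCommGroup E] [NormedSpace ℝ E] (G : ℝ → E) :
    ∫ z, G z = ∫ y, |dMobR g y| • G (moebiusR g y) := by
  conv_lhs => rw [← Measure.restrict_eq_self_of_ae_mem (ae_mem_image_moebiusR g)]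
  rw [integral_image_eq_integral_abs_deriv_smul (measurableSet_denom_ne_zero g)
      (fun y hy => (hasDerivAt_moebiusR g hy).hasDerivWithinAt) (injOn_moebiusR g),
    Measure.restrict_eq_self_of_ae_mem (s := {y | g.1 1 0 * y + g.1 1 1 ≠ 0}) (ae_denom_ne_zero g)]

lemma dMobSR_eq_sq (x : ℝ) :
    dMobSR g x = (jap x / (jap (moebiusR g x) * |g.1 1 0 * x + g.1 1 1|)) ^ 2 := by
  rw [dMobSR, dMobR, div_pow, mul_pow, sq_abs]
  generalize g.1 1 0 * x + g.1 1 1 = u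
  ring

lemma dMobSR_pos {x : ℝ} (hx : g.1 1 0 * x + g.1 1 1 ≠ 0) : 0 < dMobSR g x := by
  rw [dMobSR_eq_sq]
  have := jap_pos x
  have := jap_pos (moebiusR g x)
  positivity

lemma dMobSR_eq {y : ℝ} (hy : g.1 1 0 * y + g.1 1 1 ≠ 0) :
    dMobSR g y = (1 + y ^ 2) / ((g.1 1 0 * y + g.1 1 1) ^ 2 + (g.1 0 0 * y + g.1 0 1) ^ 2) := by
  rw [dMobSR, dMobR, jap_sq, jap_sq, moebiusR]
  generalize g.1 1 0 * y + g.1 1 1 = u at hy ⊢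
  generalize g.1 0 0 * y + g.1 0 1 = v
  have hN : u ^ 2 + v ^ 2 ≠ 0 := by positivity
  field_simp

lemma dMobSR_le {y : ℝ} (hy : g.1 1 0 * y + g.1 1 1 ≠ 0) :
    dMobSR g y ≤ g.1 0 0 ^ 2 + g.1 0 1 ^ 2 + g.1 1 0 ^ 2 + g.1 1 1 ^ 2 := by
  rw [dMobSR_eq g hy, div_le_iff₀ (by positivity)]
  have hdet := SL2R.det_eq g
  set u := g.1 1 0 * y + g.1 1 1
  set v := g.1 0 0 * y + g.1 0 1
  -- `g⁻¹` maps `(v, u)` back to `(y, 1)`; Cauchy–Schwarz bounds both coordinates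
  have h1 : g.1 0 0 * u - g.1 1 0 * v = 1 := by linear_combination hdet
  have h2 : g.1 1 1 * v - g.1 0 1 * u = y := by linear_combination y * hdet
  nlinarith [sq_nonneg (g.1 0 0 * v + g.1 1 0 * u), sq_nonneg (g.1 1 1 * u + g.1 0 1 * v)]

lemma dS_moebiusR {x y : ℝ} (hx : g.1 1 0 * x + g.1 1 1 ≠ 0) (hy : g.1 1 0 * y + g.1 1 1 ≠ 0) :
    dS (moebiusR g x) (moebiusR g y) = √(dMobSR g x * dMobSR g y) * dS x y := by
  have := jap_pos x
  have := jap_pos y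
  have := jap_pos (moebiusR g x)
  have := jap_pos (moebiusR g y)
  have := abs_pos.2 hx
  have := abs_pos.2 hy
  rw [dMobSR_eq_sq, dMobSR_eq_sq, ← mul_pow, Real.sqrt_sq (by positivity), dS, dS,
    moebiusR_sub g hx hy, abs_div, abs_mul]
  field_simp

lemma abs_dMobR_mul_density (y : ℝ) :
    |dMobR g y| * (2 / (1 + moebiusR g y ^ 2)) = dMobSR g y * (2 / (1 + y ^ 2)) := by
  rw [abs_of_nonneg (by rw [dMobR]; positivity), dMobSR, ← jap_sq, ← jap_sq]
  have := jap_pos y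
  have := jap_pos (moebiusR g y)
  field_simp

end Moebius

section Pullback

variable (g : SL2R) (s : ℂ)

def moebiusPullback (f : ℝ → ℂ) (y : ℝ) : ℂ :=
  if g.1 1 0 * y + g.1 1 1 = 0 then 0 else cpowR (dMobSR g y) (1 - s) * f (moebiusR g y)

lemma measurable_moebiusPullback {f : ℝ → ℂ} (hf : Measurable f) :
    Measurable (moebiusPullback g s f) := by
  refine Measurable.ite (measurableSet_eq_fun (by fun_prop) measurable_const) measurable_const
    (Measurable.mul (Measurable.cpowR ?_ _) (hf.comp (by unfold moebiusR; fun_prop)))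
  unfold dMobSR dMobR moebiusR
  have := continuous_jap.measurable
  fun_prop

lemma norm_moebiusPullback_le (hs : s.re ≤ 1) {f : ℝ → ℂ} {M : ℝ} (hf : ∀ x, ‖f x‖ ≤ M) (y : ℝ) :
    ‖moebiusPullback g s f y‖
      ≤ (g.1 0 0 ^ 2 + g.1 0 1 ^ 2 + g.1 1 0 ^ 2 + g.1 1 1 ^ 2) ^ (1 - s).re * M := by
  have hM : 0 ≤ M := (norm_nonneg _).trans (hf 0)
  unfold moebiusPullback
  split_ifs with hy
  · simpa using mul_nonneg (Real.rpow_nonneg (by positivity) _) hM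
  · rw [norm_mul, norm_cpowR_of_pos (dMobSR_pos g hy)]
    exact mul_le_mul (Real.rpow_le_rpow (dMobSR_pos g hy).le (dMobSR_le g hy)
      (by simpa using hs)) (hf _) (norm_nonneg _) (by positivity)

lemma cpowR_dS_moebiusR {x y : ℝ} (hx : g.1 1 0 * x + g.1 1 1 ≠ 0)
    (hy : g.1 1 0 * y + g.1 1 1 ≠ 0) (hxy : x ≠ y) :
    cpowR (dS (moebiusR g x) (moebiusR g y)) (-2 * s)
      = cpowR (dMobSR g x) (-s) * cpowR (dMobSR g y) (-s) * cpowR (dS x y) (-2 * s) := by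
  have hMx := dMobSR_pos g hx
  have hMy := dMobSR_pos g hy
  rw [dS_moebiusR g hx hy, cpowR_mul (Real.sqrt_pos.2 (mul_pos hMx hMy)) (dS_pos hxy), neg_mul,
    ← mul_neg, cpowR_sqrt (mul_pos hMx hMy).le, cpowR_mul hMx hMy]

lemma integral_cpowR_dS_moebiusR (f : ℝ → ℂ) {x : ℝ} (hx : g.1 1 0 * x + g.1 1 1 ≠ 0) :
    ∫ y, cpowR (dS (moebiusR g x) y) (-2 * s) * f y ∂muP
      = cpowR (dMobSR g x) (-s) * ∫ y, cpowR (dS x y) (-2 * s) * moebiusPullback g s f y ∂muP := by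
  rw [integral_muP (E := ℂ), integral_comp_moebiusR g (E := ℂ), integral_muP (E := ℂ),
    ← integral_const_mul]
  refine integral_congr_ae ?_
  filter_upwards [ae_denom_ne_zero g, Measure.ae_ne volume x] with y hy hyx
  have hMy := dMobSR_pos g hy
  have hdens := congrArg ((↑) : ℝ → ℂ) (abs_dMobR_mul_density g y)
  push_cast at hdens
  simp only [moebiusPullback, if_neg hy, Complex.real_smul, cpowR_dS_moebiusR g s hx hy hyx.symm]
  rw [sub_eq_add_neg, cpowR_add, cpowR_one hMy]
  push_cast
  linear_combination (cpowR (dMobSR g x) (-s) * cpowR (dMobSR g y) (-s) * cpowR (dS x y) (-2 * s)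
    * f (moebiusR g y)) * hdens

end Pullback

/-- Equivariance of `B(s)`: for `γ ∈ SL(2,ℝ)`, `Re s < 1/2`, `f` bounded
measurable and `x` away from the pole, the integrals defining `(B(s)f)(γ(x))` and `(B(s)g)(x)`
converge absolutely, where `g(x') = |γ'(x')|_S^{1−s} f(γ(x'))`, and
`|γ'(x)|_S^s (B(s)f)(γ(x)) = (B(s)g)(x)`. -/
theorem stmt6 (g : SL2R) (s : ℂ) (hs : s.re < 1 / 2) (f : ℝ → ℂ)
    (hfm : Measurable f) (M : ℝ) (hfb : ∀ x, ‖f x‖ ≤ M) (x : ℝ)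
    (hx : g.1 1 0 * x + g.1 1 1 ≠ 0) :
    Integrable (fun y => cpowR (dS (moebiusR g x) y) (-2 * s) * f y) muP ∧
    Integrable (fun y => cpowR (dS x y) (-2 * s) *
      (if g.1 1 0 * y + g.1 1 1 = 0 then 0
       else cpowR (dMobSR g y) (1 - s) * f (moebiusR g y))) muP ∧
    cpowR (dMobSR g x) s * Bop s f (moebiusR g x)
      = Bop s (fun y => if g.1 1 0 * y + g.1 1 1 = 0 then 0
          else cpowR (dMobSR g y) (1 - s) * f (moebiusR g y)) x := by
  refine ⟨(integrable_cpowR_dS hs _).mul_bdd hfm.aestronglyMeasurable (ae_of_all _ hfb),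
    (integrable_cpowR_dS hs x).mul_bdd (measurable_moebiusPullback g s hfm).aestronglyMeasurable
      (ae_of_all _ (norm_moebiusPullback_le g s (by linarith) hfb)), ?_⟩
  change _ = Bop s (moebiusPullback g s f) x
  rw [Bop, Bop, integral_cpowR_dS_moebiusR g s f hx, mul_left_comm, ← mul_assoc (cpowR _ s),
    ← cpowR_add, add_neg_cancel, cpowR_zero, one_mul]
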